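/- Let $I$ be a nonnegative random variable with finite mean $\mu$ and finite positive variance $\sigma^2$ satisfying $|\Pr[(I-\mu)/\sigma \le x] - \Psi(x)| \le \Xi\,c(x)$ for all real $x$, and let $H$ be an independent nonnegative random variable with density $q$. Fix $\tau > 0$, $r \ge 0$, and constants $P_k, G_k(r), \mathsf{SNR}_k, \mathsf{PG} > 0$. Define $\zeta(h) = (P_k(h G_k(r)/(e^\tau-1) - \mathsf{SNR}_k^{-1})\,\mathsf{PG} - \mu)/\sigma$, $h_0 = \mathsf{SNR}_k^{-1}(e^\tau-1)/G_k(r)$, $V^+(h) = \min\{1, \Psi(\zeta(h)) + \Xi c(\zeta(h))\}\,\mathbf{1}\{h \ge h_0\}$ and $V^-(h) = \max\{0, \Psi(\zeta(h)) - \Xi c(\zeta(h))\}\,\mathbf{1}\{h \ge h_0\}$. Then the outage probability $P_{out} = \Pr[\log(1 + P_k H G_k(r)/(N_0 + I/\mathsf{PG})) < \tau]$ with $N_0 = P_k/\mathsf{SNR}_k$ satisfies $1 - \mathbb{E}[V^+(H)] \le P_{out} \le 1 - \mathbb{E}[V^-(H)]$. -/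

import Mathlib

/-!
Given `H = h`, the link is in outage exactly when the interference exceeds the threshold
`t(h) = PG (P_k h G_k(r) / (e^τ - 1) - N₀)`, so by independence
`P_out = 1 - 𝔼[F(t(H))]` with `F` the distribution function of `I`. Since `(t(h) - μ)/σ = ζ(h)`,
the normal approximation squeezes `F(t(h))` between `Ψ(ζ(h)) ∓ Ξ c(ζ(h))`, clipped to `[0, 1]`;
and `F(t(h)) = 0` for `h < h₀` because then `t(h) < 0 ≤ I`.
-/

open MeasureTheory ProbabilityTheory

/-- The standard normal cumulative distribution function. -/
noncomputable def stdNormalCDF (x : ℝ) : ℝ :=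
  (1 / Real.sqrt (2 * Real.pi)) * ∫ t in Set.Iic x, Real.exp (-t ^ 2 / 2)

/-- The weight function `c(x) = min(0.4785, 31.935/(1+|x|³))`. -/
noncomputable def cBE (x : ℝ) : ℝ := min 0.4785 (31.935 / (1 + |x| ^ 3))

lemma integrable_exp_neg_sq_div_two : Integrable fun t : ℝ => Real.exp (-t ^ 2 / 2) := by
  simpa [neg_div, div_eq_inv_mul] using integrable_exp_neg_mul_sq (b := (1 / 2 : ℝ)) (by norm_num)

lemma monotone_stdNormalCDF : Monotone stdNormalCDF := fun x y hxy => by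
  unfold stdNormalCDF
  refine mul_le_mul_of_nonneg_left ?_ (by positivity)
  exact setIntegral_mono_set integrable_exp_neg_sq_div_two.integrableOn
    (.of_forall fun t => by positivity) (Set.Iic_subset_Iic.mpr hxy).eventuallyLE

@[fun_prop]
lemma measurable_stdNormalCDF : Measurable stdNormalCDF :=
  monotone_stdNormalCDF.measurable

@[fun_prop]
lemma measurable_cBE : Measurable cBE := by
  unfold cBE
  fun_prop

namespace ProbabilityTheory.IndepFun

variable {Ω : Type*} [MeasurableSpace Ω] {P : Measure Ω} [IsFiniteMeasure P]

theorem measure_mem_eq_lintegral {α β : Type*} [MeasurableSpace α] [MeasurableSpace β]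
    {X : Ω → α} {Y : Ω → β} (hX : Measurable X) (hY : Measurable Y) (hXY : IndepFun X Y P)
    {S : Set (α × β)} (hS : MeasurableSet S) :
    P {ω | (X ω, Y ω) ∈ S} = ∫⁻ ω, P {ω' | (X ω', Y ω) ∈ S} ∂P := by
  have hmap := (indepFun_iff_map_prod_eq_prod_map_map hX.aemeasurable hY.aemeasurable).mp hXY
  calc P {ω | (X ω, Y ω) ∈ S}
      = P.map (fun ω => (X ω, Y ω)) S := (Measure.map_apply (hX.prodMk hY) hS).symm
    _ = ∫⁻ y, P.map X ((fun x => (x, y)) ⁻¹' S) ∂P.map Y := by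
        rw [hmap, Measure.prod_apply_symm hS]
    _ = ∫⁻ ω, P {ω' | (X ω', Y ω) ∈ S} ∂P := by
        rw [lintegral_map (measurable_measure_prodMk_right hS) hY]
        congr! with ω
        exact Measure.map_apply hX (measurable_prodMk_right hS)

theorem measure_le_comp_eq_integral {X Y : Ω → ℝ} (hX : Measurable X) (hY : Measurable Y)
    (hXY : IndepFun X Y P) {t : ℝ → ℝ} (ht : Monotone t) :
    (P {ω | X ω ≤ t (Y ω)}).toReal = ∫ ω, (P {ω' | X ω' ≤ t (Y ω)}).toReal ∂P := by
  have hS : MeasurableSet {p : ℝ × ℝ | p.1 ≤ t p.2} :=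
    measurableSet_le measurable_fst (ht.measurable.comp measurable_snd)
  have hmono : Monotone fun y => P {ω' | X ω' ≤ t y} :=
    fun a b hab => measure_mono fun ω hω => hω.trans (ht hab)
  have key := hXY.measure_mem_eq_lintegral hX hY hS
  simp only [Set.mem_ofPred_eq] at key
  rw [key]
  exact (integral_toReal (hmono.measurable.comp hY).aemeasurable
    (.of_forall fun _ => measure_lt_top _ _)).symm

end ProbabilityTheory.IndepFun

section Outage

noncomputable def interferenceThreshold (τ Pk Gkr SNRk PG h : ℝ) : ℝ :=
  Pk * (h * Gkr / (Real.exp τ - 1) - SNRk⁻¹) * PG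

variable {τ Pk Gkr SNRk PG : ℝ}

lemma monotone_interferenceThreshold (hτ : 0 < τ) (hPk : 0 ≤ Pk) (hGkr : 0 ≤ Gkr)
    (hPG : 0 ≤ PG) : Monotone (interferenceThreshold τ Pk Gkr SNRk PG) := fun a b hab => by
  have : 0 < Real.exp τ - 1 := by linarith [Real.add_one_lt_exp hτ.ne']
  unfold interferenceThreshold
  gcongr

lemma interferenceThreshold_neg (hτ : 0 < τ) (hPk : 0 < Pk) (hGkr : 0 < Gkr) (hPG : 0 < PG)
    {h : ℝ} (hh : h < SNRk⁻¹ * (Real.exp τ - 1) / Gkr) :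
    interferenceThreshold τ Pk Gkr SNRk PG h < 0 := by
  have hE : 0 < Real.exp τ - 1 := by linarith [Real.add_one_lt_exp hτ.ne']
  have : h * Gkr / (Real.exp τ - 1) < SNRk⁻¹ := by
    rw [div_lt_iff₀ hE]
    rwa [lt_div_iff₀ hGkr] at hh
  unfold interferenceThreshold
  exact mul_neg_of_neg_of_pos (mul_neg_of_pos_of_neg hPk (by linarith)) hPG

lemma log_one_add_sinr_lt_iff (hτ : 0 < τ) (hPk : 0 < Pk) (hGkr : 0 < Gkr) (hSNRk : 0 < SNRk)
    (hPG : 0 < PG) {h i : ℝ} (hh : 0 ≤ h) (hi : 0 ≤ i) :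
    Real.log (1 + Pk * h * Gkr / (Pk / SNRk + i / PG)) < τ ↔
      interferenceThreshold τ Pk Gkr SNRk PG h < i := by
  have hE : 0 < Real.exp τ - 1 := by linarith [Real.add_one_lt_exp hτ.ne']
  have hD : 0 < Pk / SNRk + i / PG := by positivity
  have hsinr : 0 ≤ Pk * h * Gkr / (Pk / SNRk + i / PG) := by positivity
  rw [Real.log_lt_iff_lt_exp (by linarith), ← lt_sub_iff_add_lt', div_lt_iff₀ hD,
    ← div_lt_iff₀' hE, ← sub_lt_iff_lt_add', lt_div_iff₀ hPG]
  have : interferenceThreshold τ Pk Gkr SNRk PG h =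
      (Pk * h * Gkr / (Real.exp τ - 1) - Pk / SNRk) * PG := by
    unfold interferenceThreshold
    ring
  rw [this]

theorem measure_log_one_add_sinr_lt {Ω : Type*} [MeasurableSpace Ω] {P : Measure Ω}
    [IsProbabilityMeasure P] {I H : Ω → ℝ} (hIm : Measurable I) (hHm : Measurable H)
    (hInn : ∀ ω, 0 ≤ I ω) (hHnn : ∀ ω, 0 ≤ H ω) (hindep : IndepFun I H P)
    (hτ : 0 < τ) (hPk : 0 < Pk) (hGkr : 0 < Gkr) (hSNRk : 0 < SNRk) (hPG : 0 < PG) :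
    (P {ω | Real.log (1 + Pk * H ω * Gkr / (Pk / SNRk + I ω / PG)) < τ}).toReal =
      1 - ∫ ω, (P {ω' | I ω' ≤ interferenceThreshold τ Pk Gkr SNRk PG (H ω)}).toReal ∂P := by
  have ht := monotone_interferenceThreshold (SNRk := SNRk) hτ hPk.le hGkr.le hPG.le
  have hsucc : MeasurableSet {ω | I ω ≤ interferenceThreshold τ Pk Gkr SNRk PG (H ω)} :=
    measurableSet_le hIm (ht.measurable.comp hHm)
  simp_rw [log_one_add_sinr_lt_iff hτ hPk hGkr hSNRk hPG (hHnn _) (hInn _), ← not_le]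
  rw [← Set.compl_ofPred, prob_compl_eq_one_sub hsucc, ENNReal.toReal_sub_of_le prob_le_one
    ENNReal.one_ne_top, ENNReal.toReal_one, hindep.measure_le_comp_eq_integral hIm hHm ht]

end Outage

lemma indicator_max_zero_sub_mem_Icc {s : Set ℝ} {f e : ℝ → ℝ} {p h : ℝ} (hp : 0 ≤ p)
    (happrox : h ∈ s → |p - f h| ≤ e h) :
    s.indicator (fun x => max 0 (f x - e x)) h ∈ Set.Icc 0 p := by
  by_cases hs : h ∈ s
  · rw [Set.indicator_of_mem hs]
    exact ⟨le_max_left _ _, max_le hp (by linarith [(abs_le.mp (happrox hs)).1])⟩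
  · rw [Set.indicator_of_notMem hs]
    exact ⟨le_rfl, hp⟩

lemma indicator_min_one_add_mem_Icc {s : Set ℝ} {f e : ℝ → ℝ} {p h : ℝ} (hp : p ≤ 1)
    (hzero : h ∉ s → p = 0) (happrox : h ∈ s → |p - f h| ≤ e h) :
    s.indicator (fun x => min 1 (f x + e x)) h ∈ Set.Icc p 1 := by
  by_cases hs : h ∈ s
  · rw [Set.indicator_of_mem hs]
    exact ⟨le_min hp (by linarith [(abs_le.mp (happrox hs)).2]), min_le_left _ _⟩
  · rw [Set.indicator_of_notMem hs, hzero hs]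
    exact ⟨le_rfl, zero_le_one⟩

lemma integral_comp_mono_of_le_one {Ω : Type*} [MeasurableSpace Ω] {P : Measure Ω}
    [IsFiniteMeasure P] {H : Ω → ℝ} (hH : Measurable H) {f g : ℝ → ℝ} (hf : Measurable f)
    (hg : Measurable g) (hf0 : ∀ x, 0 ≤ f x) (hfg : ∀ x, f x ≤ g x) (hg1 : ∀ x, g x ≤ 1) :
    ∫ ω, f (H ω) ∂P ≤ ∫ ω, g (H ω) ∂P := by
  have hbound {u : ℝ → ℝ} (hu : Measurable u) (hu0 : ∀ x, 0 ≤ u x) (hu1 : ∀ x, u x ≤ 1) :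
      Integrable (fun ω => u (H ω)) P :=
    .of_bound (hu.comp hH).aestronglyMeasurable 1 <| .of_forall fun ω => by
      rw [Real.norm_eq_abs, abs_of_nonneg (hu0 _)]
      exact hu1 _
  exact integral_mono (hbound hf hf0 fun x => (hfg x).trans (hg1 x))
    (hbound hg (fun x => (hf0 x).trans (hfg x)) hg1) fun ω => hfg (H ω)

theorem stmt5_general {Ω : Type*} [MeasureSpace Ω] [IsProbabilityMeasure (ℙ : Measure Ω)]
    (I H : Ω → ℝ) (hIm : Measurable I) (hHm : Measurable H)
    (hInn : ∀ ω, 0 ≤ I ω) (hHnn : ∀ ω, 0 ≤ H ω)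
    (hindep : IndepFun I H ℙ)
    (μ σ Ξ : ℝ) (hσ : 0 < σ)
    (happrox : ∀ x : ℝ,
      |(ℙ {ω | (I ω - μ) / σ ≤ x}).toReal - stdNormalCDF x| ≤ Ξ * cBE x)
    (τ Pk Gkr SNRk PG : ℝ) (hτ : 0 < τ)
    (hPk : 0 < Pk) (hGkr : 0 < Gkr) (hSNRk : 0 < SNRk) (hPG : 0 < PG)
    (ζ : ℝ → ℝ)
    (hζ : ∀ h, ζ h = (Pk * (h * Gkr / (Real.exp τ - 1) - SNRk⁻¹) * PG - μ) / σ)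
    (h0 : ℝ) (hh0 : h0 = SNRk⁻¹ * (Real.exp τ - 1) / Gkr)
    (Vp Vm : ℝ → ℝ)
    (hVp : ∀ h, Vp h =
      (Set.Ici h0).indicator (fun x => min 1 (stdNormalCDF (ζ x) + Ξ * cBE (ζ x))) h)
    (hVm : ∀ h, Vm h =
      (Set.Ici h0).indicator (fun x => max 0 (stdNormalCDF (ζ x) - Ξ * cBE (ζ x))) h) :
    1 - ∫ ω, Vp (H ω) ∂ℙ ≤
      (ℙ {ω | Real.log (1 + Pk * H ω * Gkr / (Pk / SNRk + I ω / PG)) < τ}).toReal ∧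
    (ℙ {ω | Real.log (1 + Pk * H ω * Gkr / (Pk / SNRk + I ω / PG)) < τ}).toReal ≤
      1 - ∫ ω, Vm (H ω) ∂ℙ := by
  set t := interferenceThreshold τ Pk Gkr SNRk PG
  have ht : Monotone t := monotone_interferenceThreshold hτ hPk.le hGkr.le hPG.le
  set F : ℝ → ℝ := fun h => (ℙ {ω | I ω ≤ t h}).toReal
  have hF : Measurable F := Monotone.measurable fun a b hab =>
    ENNReal.toReal_mono (measure_ne_top _ _) (measure_mono fun ω hω => hω.trans (ht hab))
  have hF01 (h : ℝ) : F h ∈ Set.Icc 0 1 := ⟨ENNReal.toReal_nonneg, measureReal_le_one⟩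
  have hFapprox (h : ℝ) : |F h - stdNormalCDF (ζ h)| ≤ Ξ * cBE (ζ h) := by
    have hset : {ω | (I ω - μ) / σ ≤ ζ h} = {ω | I ω ≤ t h} := by
      ext ω
      rw [Set.mem_ofPred_eq, hζ, div_le_div_iff_of_pos_right hσ, sub_le_sub_iff_right]
      rfl
    simpa only [hset] using happrox (ζ h)
  have hFzero (h : ℝ) (hh : h ∉ Set.Ici h0) : F h = 0 := by
    have ht0 : t h < 0 :=
      interferenceThreshold_neg hτ hPk hGkr hPG (hh0 ▸ Set.notMem_Ici.mp hh)
    simp [F, fun ω => not_le.mpr (ht0.trans_le (hInn ω))]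
  have hVpF (h : ℝ) : Vp h ∈ Set.Icc (F h) 1 :=
    hVp h ▸ indicator_min_one_add_mem_Icc (hF01 h).2 (hFzero h) fun _ => hFapprox h
  have hVmF (h : ℝ) : Vm h ∈ Set.Icc 0 (F h) :=
    hVm h ▸ indicator_max_zero_sub_mem_Icc (hF01 h).1 fun _ => hFapprox h
  have hζm : Measurable ζ := by simp_rw [funext hζ]; fun_prop
  have hVpm : Measurable Vp := by
    rw [funext hVp]
    exact .indicator (by fun_prop) measurableSet_Ici
  have hVmm : Measurable Vm := by
    rw [funext hVm]
    exact .indicator (by fun_prop) measurableSet_Ici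
  rw [measure_log_one_add_sinr_lt hIm hHm hInn hHnn hindep hτ hPk hGkr hSNRk hPG]
  constructor
  · linarith [integral_comp_mono_of_le_one (P := ℙ) hHm hF hVpm (fun h => (hF01 h).1)
      (fun h => (hVpF h).1) fun h => (hVpF h).2]
  · linarith [integral_comp_mono_of_le_one (P := ℙ) hHm hVmm hF (fun h => (hVmF h).1)
      (fun h => (hVmF h).2) fun h => (hF01 h).2]

theorem stmt5 {Ω : Type*} [MeasureSpace Ω] [IsProbabilityMeasure (ℙ : Measure Ω)]
    (I H : Ω → ℝ) (hIm : Measurable I) (hHm : Measurable H)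
    (hInn : ∀ ω, 0 ≤ I ω) (hHnn : ∀ ω, 0 ≤ H ω)
    (hindep : IndepFun I H ℙ)
    (q : ℝ → ℝ) (hq : ∀ x, 0 ≤ q x) (hqm : Measurable q)
    (hdens : Measure.map H ℙ = volume.withDensity (fun x => ENNReal.ofReal (q x)))
    (μ σ Ξ : ℝ) (hσ : 0 < σ) (hΞ : 0 ≤ Ξ)
    (hIint : Integrable I ℙ) (hμ : μ = ∫ ω, I ω ∂ℙ)
    (hvar : ProbabilityTheory.variance I ℙ = σ ^ 2)
    (happrox : ∀ x : ℝ,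
      |(ℙ {ω | (I ω - μ) / σ ≤ x}).toReal - stdNormalCDF x| ≤ Ξ * cBE x)
    (τ r Pk Gkr SNRk PG : ℝ) (hτ : 0 < τ) (hr : 0 ≤ r)
    (hPk : 0 < Pk) (hGkr : 0 < Gkr) (hSNRk : 0 < SNRk) (hPG : 0 < PG)
    (ζ : ℝ → ℝ)
    (hζ : ∀ h, ζ h = (Pk * (h * Gkr / (Real.exp τ - 1) - SNRk⁻¹) * PG - μ) / σ)
    (h0 : ℝ) (hh0 : h0 = SNRk⁻¹ * (Real.exp τ - 1) / Gkr)
    (Vp Vm : ℝ → ℝ)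
    (hVp : ∀ h, Vp h =
      (Set.Ici h0).indicator (fun x => min 1 (stdNormalCDF (ζ x) + Ξ * cBE (ζ x))) h)
    (hVm : ∀ h, Vm h =
      (Set.Ici h0).indicator (fun x => max 0 (stdNormalCDF (ζ x) - Ξ * cBE (ζ x))) h) :
    1 - ∫ ω, Vp (H ω) ∂ℙ ≤
      (ℙ {ω | Real.log (1 + Pk * H ω * Gkr / (Pk / SNRk + I ω / PG)) < τ}).toReal ∧
    (ℙ {ω | Real.log (1 + Pk * H ω * Gkr / (Pk / SNRk + I ω / PG)) < τ}).toReal ≤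
      1 - ∫ ω, Vm (H ω) ∂ℙ :=
  stmt5_general I H hIm hHm hInn hHnn hindep μ σ Ξ hσ happrox τ Pk Gkr SNRk PG hτ hPk hGkr hSNRk hPG
    ζ hζ h0 hh0 Vp Vm hVp hVm
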